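/- Let C_n be the cycle graph on n ≥ 4 vertices. Then ℓ(C_n) = 2n − 2; that is, there exists a word of length 2n − 2 that word-represents C_n, and every word that word-represents C_n has length at least 2n − 2. -/

import Mathlib

variable {V : Type*}

/-- The restriction of a word `w` to the letters `x` and `y`. -/
def restrictWord [DecidableEq V] (w : List V) (x y : V) : List V :=
  w.filter fun z => decide (z = x ∨ z = y)

/-- `x` and `y` alternate in `w`: the restriction of `w` to `{x, y}` has no two
consecutive equal letters. -/
def Alternates [DecidableEq V] (w : List V) (x y : V) : Prop :=
  (restrictWord w x y).Chain' (· ≠ ·)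

/-- `w` word-represents the simple graph `G`: every vertex occurs in `w`, and two distinct
vertices are adjacent iff they alternate in `w`. -/
def Represents [DecidableEq V] (G : SimpleGraph V) (w : List V) : Prop :=
  (∀ v : V, v ∈ w) ∧ ∀ x y : V, x ≠ y → (G.Adj x y ↔ Alternates w x y)

/-- `ℓ(G)`: the minimal length of a word-representant of `G`. -/
noncomputable def minRepLength [DecidableEq V] (G : SimpleGraph V) : ℕ :=
  sInf {n | ∃ w : List V, Represents G w ∧ w.length = n}

/-- The cycle graph `C_n` on vertex set `Fin n`, with an edge between `i` and `i + 1`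
(indices modulo `n`). -/
def cycleGraph (n : ℕ) : SimpleGraph (Fin n) :=
  SimpleGraph.fromRel fun i j => (i.val + 1) % n = j.val

/-!
A letter occurring only once in a word-representant alternates with every other letter occurring
only once, so these letters form a clique. In the triangle-free graph `C_n` (`n ≥ 4`) there are
at most two of them and all other letters occur at least twice, so the word has length at least
`2n - 2`. Conversely the word `1 0 2 1 3 2 ⋯ (n-1) (n-2)` of length `2n - 2` represents `C_n`;
this is checked by induction, appending one block `(m+1) m` at a time.
-/

open Finset

lemma SimpleGraph.IsClique.card_lt_of_cliqueFree {G : SimpleGraph V} {n : ℕ} {s : Finset V}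
    (hs : G.IsClique (s : Set V)) (hG : G.CliqueFree n) : #s < n := by
  by_contra! h
  obtain ⟨t, hts, rfl⟩ := exists_subset_card_eq h
  exact hG t ⟨hs.subset hts, rfl⟩

lemma List.sum_count_eq_length [DecidableEq V] [Fintype V] (w : List V) :
    ∑ v, w.count v = w.length := by
  simpa using Multiset.sum_count_eq_card (s := univ) (m := (w : Multiset V)) (by simp)

lemma List.isChain_ne_replicate_iff {a : V} {n : ℕ} :
    (List.replicate n a).IsChain (· ≠ ·) ↔ n ≤ 1 := by
  match n with
  | 0 | 1 => simp
  | n + 2 => simp [List.replicate_succ]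

section WordRepresentation

variable [DecidableEq V]

@[simp]
lemma restrictWord_nil (x y : V) : restrictWord [] x y = [] :=
  rfl

lemma restrictWord_append (u v : List V) (x y : V) :
    restrictWord (u ++ v) x y = restrictWord u x y ++ restrictWord v x y :=
  List.filter_append ..

lemma restrictWord_cons_of_mem {u x y : V} (w : List V) (h : u = x ∨ u = y) :
    restrictWord (u :: w) x y = u :: restrictWord w x y :=
  List.filter_cons_of_pos (by simpa using h)

lemma restrictWord_cons_of_not_mem {u x y : V} (w : List V) (h : ¬(u = x ∨ u = y)) :
    restrictWord (u :: w) x y = restrictWord w x y :=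
  List.filter_cons_of_neg (by simpa using h)

lemma restrictWord_of_not_mem {w : List V} {y : V} (x : V) (hy : y ∉ w) :
    restrictWord w x y = List.replicate (w.count x) x := by
  rw [restrictWord, ← List.filter_eq]
  exact List.filter_congr fun z hz => by simp [show z ≠ y by rintro rfl; exact hy hz]

lemma restrictWord_comm (w : List V) (x y : V) : restrictWord w x y = restrictWord w y x :=
  List.filter_congr fun _ _ => by simp [or_comm]

lemma restrictWord_map {U : Type*} [DecidableEq U] {f : V → U} (hf : Function.Injective f)
    (w : List V) (x y : V) :
    restrictWord (w.map f) (f x) (f y) = (restrictWord w x y).map f := by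
  simp [restrictWord, List.filter_map, Function.comp_def, hf.eq_iff]

lemma alternates_iff_isChain {w : List V} {x y : V} :
    Alternates w x y ↔ (restrictWord w x y).IsChain (· ≠ ·) :=
  Iff.rfl

lemma alternates_comm {w : List V} {x y : V} : Alternates w x y ↔ Alternates w y x := by
  rw [Alternates, Alternates, restrictWord_comm]

lemma alternates_map_iff {U : Type*} [DecidableEq U] {f : V → U} (hf : Function.Injective f)
    {w : List V} {x y : V} : Alternates (w.map f) (f x) (f y) ↔ Alternates w x y := by
  simp only [alternates_iff_isChain, restrictWord_map hf, List.isChain_map, hf.ne_iff]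

lemma alternates_of_count_le_one {w : List V} {x y : V} (hx : w.count x ≤ 1)
    (hy : w.count y ≤ 1) : Alternates w x y := by
  refine List.Pairwise.isChain (List.nodup_iff_count_le_one.mpr fun z => ?_)
  by_cases hz : z = x ∨ z = y
  · rw [restrictWord, List.count_filter (by simpa using hz)]
    rcases hz with rfl | rfl <;> assumption
  · rw [List.count_eq_zero.mpr (by simp [restrictWord, hz])]
    exact zero_le_one

lemma Represents.isClique_setOf_count_le_one {G : SimpleGraph V} {w : List V}
    (hw : Represents G w) : G.IsClique {v | w.count v ≤ 1} :=
  fun x hx y hy hxy => (hw.2 x y hxy).mpr (alternates_of_count_le_one hx hy)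

theorem Represents.two_mul_card_sub_two_le_length [Fintype V] {G : SimpleGraph V}
    (hG : G.CliqueFree 3) {w : List V} (hw : Represents G w) :
    2 * Fintype.card V - 2 ≤ w.length := by
  set S := univ.filter fun v => w.count v ≤ 1
  have hS : #S < 3 := SimpleGraph.IsClique.card_lt_of_cliqueFree
    (hw.isClique_setOf_count_le_one.subset fun v => by simp [S]) hG
  have h1 : #S • 1 ≤ ∑ v ∈ S, w.count v :=
    card_nsmul_le_sum _ _ _ fun v _ => List.one_le_count_iff.mpr (hw.1 v)
  have h2 : #Sᶜ • 2 ≤ ∑ v ∈ Sᶜ, w.count v :=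
    card_nsmul_le_sum _ _ _ fun v hv => by simpa [S, Nat.lt_iff_add_one_le] using hv
  calc 2 * Fintype.card V - 2 ≤ #S • 1 + #Sᶜ • 2 := by
        rw [← card_add_card_compl S, smul_eq_mul, smul_eq_mul]
        omega
    _ ≤ ∑ v ∈ S, w.count v + ∑ v ∈ Sᶜ, w.count v := add_le_add h1 h2
    _ = w.length := by rw [sum_add_sum_compl, List.sum_count_eq_length]

end WordRepresentation

def zigzagWord : ℕ → List ℕ
  | 0 => []
  | m + 1 => zigzagWord m ++ [m + 1, m]

lemma length_zigzagWord (m : ℕ) : (zigzagWord m).length = 2 * m := by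
  induction m with
  | zero => rfl
  | succ m ih => simp [zigzagWord, ih, mul_add]

lemma count_zigzagWord (m k : ℕ) :
    (zigzagWord m).count k = (if 0 < k ∧ k ≤ m then 1 else 0) + (if k < m then 1 else 0) := by
  induction m with
  | zero =>
    rw [zigzagWord, List.count_nil]
    split_ifs <;> omega
  | succ m ih =>
    simp only [zigzagWord, List.count_append, ih, List.count_cons, List.count_nil, beq_iff_eq]
    split_ifs <;> omega

lemma mem_zigzagWord {m k : ℕ} : k ∈ zigzagWord m ↔ k ≤ m ∧ 0 < m := by
  rw [← List.count_pos_iff, count_zigzagWord]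
  split_ifs <;> omega

lemma getLast?_restrictWord_zigzagWord {m a : ℕ} (ha : a < m) :
    (restrictWord (zigzagWord m) a m).getLast? = some (if a + 1 = m then a else m) := by
  obtain ⟨m, rfl⟩ : ∃ k, m = k + 1 := ⟨m - 1, by omega⟩
  rw [zigzagWord, restrictWord_append, restrictWord_cons_of_mem _ (by simp)]
  by_cases ham : a = m
  · rw [restrictWord_cons_of_mem _ (by omega), if_pos (by omega), ham]
    simp
  · rw [restrictWord_cons_of_not_mem _ (by omega), if_neg (by omega)]
    simp

theorem alternates_zigzagWord_iff {m a b : ℕ} (hab : a < b) (hbm : b ≤ m) :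
    Alternates (zigzagWord m) a b ↔ b = a + 1 ∨ (a = 0 ∧ b = m) := by
  induction m with
  | zero => omega
  | succ m ih =>
    rw [alternates_iff_isChain, zigzagWord, restrictWord_append]
    rcases (by omega : b < m ∨ b = m ∨ b = m + 1) with hb | rfl | rfl
    · rw [restrictWord_cons_of_not_mem _ (by omega), restrictWord_cons_of_not_mem _ (by omega),
        restrictWord_nil, List.append_nil, ← alternates_iff_isChain, ih hb.le]
      omega
    · -- the new block contributes one `b`, which must come right after the last `a`
      rw [restrictWord_cons_of_not_mem _ (by omega), restrictWord_cons_of_mem _ (by omega),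
        restrictWord_nil, List.isChain_append, getLast?_restrictWord_zigzagWord hab,
        ← alternates_iff_isChain, ih le_rfl]
      simp only [List.isChain_singleton, List.head?_cons, Option.mem_some_iff, forall_eq', true_and]
      split_ifs <;> omega
    · have hcount : (zigzagWord m).count a ≤ 1 ↔ a = 0 ∨ a = m := by
        rw [count_zigzagWord]
        split_ifs <;> omega
      have hblock : (restrictWord [m + 1, m] a (m + 1)).IsChain (· ≠ ·) :=
        List.Pairwise.isChain (.filter _ (by simp))
      have hjoin : ∀ x ∈ (List.replicate ((zigzagWord m).count a) a).getLast?,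
          ∀ y ∈ (restrictWord [m + 1, m] a (m + 1)).head?, x ≠ y := by
        rw [restrictWord_cons_of_mem _ (by simp)]
        intro x hx y hy
        rw [List.eq_of_mem_replicate (List.mem_of_getLast? hx), ← Option.mem_some_iff.mp hy]
        omega
      rw [restrictWord_of_not_mem a (by simp [mem_zigzagWord]), List.isChain_append,
        List.isChain_ne_replicate_iff, hcount, and_iff_left ⟨hblock, hjoin⟩]
      omega

lemma cycleGraph_adj_iff {n : ℕ} {x y : Fin n} :
    (cycleGraph n).Adj x y ↔ x ≠ y ∧ (x.val + 1 = y.val ∨ y.val + 1 = x.val ∨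
      (x.val = 0 ∧ y.val = n - 1) ∨ (y.val = 0 ∧ x.val = n - 1)) := by
  have succ_mod {a b : ℕ} (ha : a < n) (hb : b < n) :
      (a + 1) % n = b ↔ a + 1 = b ∨ (a + 1 = n ∧ b = 0) := by
    rcases (by omega : a + 1 < n ∨ a + 1 = n) with h | h
    · rw [Nat.mod_eq_of_lt h]; omega
    · rw [h, Nat.mod_self]; omega
  simp only [cycleGraph, SimpleGraph.fromRel_adj, succ_mod x.isLt y.isLt, succ_mod y.isLt x.isLt]
  omega

lemma cycleGraph_adj_iff_of_lt {n : ℕ} {x y : Fin n} (h : x < y) :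
    (cycleGraph n).Adj x y ↔ y.val = x.val + 1 ∨ (x.val = 0 ∧ y.val = n - 1) := by
  rw [cycleGraph_adj_iff]
  omega

lemma cycleGraph_cliqueFree_three {n : ℕ} (hn : 4 ≤ n) : (cycleGraph n).CliqueFree 3 := by
  intro s hs
  obtain ⟨a, b, c, hab, hac, hbc, -⟩ := SimpleGraph.is3Clique_iff.mp hs
  simp only [cycleGraph_adj_iff, ← Fin.val_ne_iff] at hab hac hbc
  omega

def cycleWord (n : ℕ) [NeZero n] : List (Fin n) :=
  (zigzagWord (n - 1)).map (Fin.ofNat n)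

lemma length_cycleWord (n : ℕ) [NeZero n] : (cycleWord n).length = 2 * n - 2 := by
  rw [cycleWord, List.length_map, length_zigzagWord]
  omega

lemma map_val_cycleWord (n : ℕ) [NeZero n] : (cycleWord n).map Fin.val = zigzagWord (n - 1) := by
  rw [cycleWord, List.map_map]
  refine List.map_congr_left (fun k hk => ?_) |>.trans (List.map_id _)
  have := (mem_zigzagWord.mp hk).1
  have := NeZero.pos n
  simp [Nat.mod_eq_of_lt (by omega : k < n)]

theorem represents_cycleWord {n : ℕ} [NeZero n] (hn : 2 ≤ n) :
    Represents (cycleGraph n) (cycleWord n) := by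
  refine ⟨fun v => ?_, fun x y hxy => ?_⟩
  · have : v.val ∈ (cycleWord n).map Fin.val := by
      rw [map_val_cycleWord, mem_zigzagWord]
      omega
    obtain ⟨u, hu, huv⟩ := List.mem_map.mp this
    rwa [← Fin.ext huv]
  · rw [← alternates_map_iff Fin.val_injective, map_val_cycleWord]
    rcases lt_or_gt_of_ne hxy with h | h
    · rw [cycleGraph_adj_iff_of_lt h, alternates_zigzagWord_iff h (by omega)]
    · rw [SimpleGraph.adj_comm, alternates_comm, cycleGraph_adj_iff_of_lt h,
        alternates_zigzagWord_iff h (by omega)]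

/-- For `n ≥ 4`, `ℓ(C_n) = 2n − 2`: there is a word of length `2n − 2`
word-representing the cycle `C_n`, and every word-representant of `C_n` has length at
least `2n − 2`. -/
theorem cycle_min_length (n : ℕ) (hn : 4 ≤ n) :
    (∃ w : List (Fin n), Represents (cycleGraph n) w ∧ w.length = 2 * n - 2) ∧
    (∀ w : List (Fin n), Represents (cycleGraph n) w → 2 * n - 2 ≤ w.length) := by
  have : NeZero n := ⟨by omega⟩
  refine ⟨⟨cycleWord n, represents_cycleWord (by omega), length_cycleWord n⟩,
    fun w hw => ?_⟩
  simpa using hw.two_mul_card_sub_two_le_length (cycleGraph_cliqueFree_three hn)
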